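/- With X' = m·[[1, 2r],[0, -1]] (m > 0, r ∈ ℝ), X(z) as above, and R(X', z) = ½(X', X(z))² - (X', X'), we have R(X', g·z) = 2m² |cz+d|² |(a+rc)z + b + rd|² / y² for g = [[a,b],[c,d]] ∈ SL₂(ℝ), where g·z = (az+b)/(cz+d) and z = x + iy. -/

import Mathlib

open Matrix Complex

noncomputable def Xmat (x y : ℝ) : Matrix (Fin 2) (Fin 2) ℝ :=
  (1 / y) • !![-x, x ^ 2 + y ^ 2; -1, x]

noncomputable def Rfun (X : Matrix (Fin 2) (Fin 2) ℝ) (x y : ℝ) : ℝ :=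
  (1 / 2) * (-Matrix.trace (X * Xmat x y)) ^ 2 - (-Matrix.trace (X * X))

lemma Rcomp (m r x' y' : ℝ) (hy' : y' ≠ 0) :
    Rfun (m • !![(1:ℝ), 2 * r; 0, -1]) x' y' =
      2 * m ^ 2 * ((x' + r) ^ 2 + y' ^ 2) / y' ^ 2 := by
  rw [Rfun, Xmat]
  simp only [Matrix.trace_fin_two, Matrix.smul_apply, Matrix.mul_apply, Fin.sum_univ_two,
    Matrix.cons_val', Matrix.cons_val_zero, Matrix.cons_val_one, Matrix.head_cons,
    Matrix.empty_val', Matrix.cons_val_fin_one, smul_eq_mul, Matrix.of_apply]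
  field_simp
  ring

set_option linter.unusedVariables false in
theorem R_mobius_formula (m r a b c d x y : ℝ) (hm : 0 < m) (hy : 0 < y)
    (hdet : a * d - b * c = 1) :
    Rfun (m • !![(1:ℝ), 2 * r; 0, -1])
        (((a * (x + y * Complex.I) + b) / (c * (x + y * Complex.I) + d)).re)
        (((a * (x + y * Complex.I) + b) / (c * (x + y * Complex.I) + d)).im) =
      2 * m ^ 2 * ‖c * (x + y * Complex.I) + d‖ ^ 2 *
        ‖(a + r * c) * (x + y * Complex.I) + b + r * d‖ ^ 2 / y ^ 2 := by
  have hDpos : 0 < (c * x + d) ^ 2 + (c * y) ^ 2 := by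
    rcases eq_or_ne c 0 with hc | hc
    · have hd : d ≠ 0 := by rintro rfl; rw [hc] at hdet; simp at hdet
      subst hc; simpa using by positivity
    · have h1 : (0:ℝ) < (c * y) ^ 2 := by positivity
      positivity
  have hD : (c * x + d) ^ 2 + (c * y) ^ 2 ≠ 0 := ne_of_gt hDpos
  have hden : Complex.normSq (↑c * (↑x + ↑y * I) + ↑d) = (c * x + d) ^ 2 + (c * y) ^ 2 := by
    simp [Complex.normSq_apply]; ring
  have hre : ((a * (x + y * Complex.I) + b) / (c * (x + y * Complex.I) + d)).re =
      ((a * x + b) * (c * x + d) + a * c * y ^ 2) / ((c * x + d) ^ 2 + (c * y) ^ 2) := by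
    rw [Complex.div_re, hden]
    congr 1
    simp only [Complex.add_re, Complex.add_im, Complex.mul_re, Complex.mul_im, Complex.ofReal_re,
      Complex.ofReal_im, Complex.I_re, Complex.I_im]
    ring
  have him : ((a * (x + y * Complex.I) + b) / (c * (x + y * Complex.I) + d)).im =
      y / ((c * x + d) ^ 2 + (c * y) ^ 2) := by
    rw [Complex.div_im, hden]
    simp only [Complex.add_im, Complex.add_re, Complex.mul_im, Complex.mul_re, Complex.ofReal_re,
      Complex.ofReal_im, Complex.I_re, Complex.I_im]
    rw [div_sub_div_same]
    congr 1
    linear_combination y * hdet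
  have key : ((a * x + b) * (c * x + d) + a * c * y ^ 2 + r * ((c * x + d) ^ 2 + (c * y) ^ 2)) ^ 2
        + y ^ 2
      = ((c * x + d) ^ 2 + (c * y) ^ 2) *
        (((a + r * c) * x + (b + r * d)) ^ 2 + ((a + r * c) * y) ^ 2) := by
    linear_combination (-(y ^ 2) * (a * d - b * c + 1)) * hdet
  have habs2 : ‖(↑a + ↑r * ↑c) * (↑x + ↑y * I) + ↑b + ↑r * ↑d‖ ^ 2 =
      ((a + r * c) * x + (b + r * d)) ^ 2 + ((a + r * c) * y) ^ 2 := by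
    rw [Complex.sq_norm, Complex.normSq_apply]
    simp only [Complex.add_re, Complex.add_im, Complex.mul_re, Complex.mul_im, Complex.ofReal_re,
      Complex.ofReal_im, Complex.I_re, Complex.I_im]
    ring
  rw [hre, him, Rcomp _ _ _ _ (by positivity), Complex.sq_norm, hden, habs2]
  field_simp
  have hD2 : (x * c + d) ^ 2 + c ^ 2 * y ^ 2 ≠ 0 := by convert hD using 2 <;> ring
  field_simp
  linear_combination (1) * key
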